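/- arXiv:2411.06888 — 4 statements merged into one kernel-verified Lean document; each statement's English description precedes it below -/
import Mathlib

section
/- For integers p, q ≥ 1 and u ≥ 0, define φ(u) = (1/(p+q+1)) · [∫₀¹ y^{q−1}(yu+1)^{−(p+q+1)} dy] / [∫₀¹ y^{q−1}(yu+1)^{−(p+q+2)} dy]. Then φ(0) = 1/(p+q+1) and φ is nondecreasing in u on [0,∞). -/
/-!
For `u > 0` the substitution `t = y u` turns both integrals into integrals over `[0, u]` with
the same power of `u` as a factor, which cancels. With
`g t = t ^ (q - 1) * (t + 1) ^ (-(p + q + 2))` this gives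
`(p + q + 1) φ u = ∫₀ᵘ (t + 1) g t dt / ∫₀ᵘ g t dt`, the average of the increasing weight `t + 1`
against the positive density `g` on `[0, u]`. Such an average can only grow with `u`: the old
average is at most the weight at `u`, and the mass added on `[u, v]` sees weights at least that
large. At `u = 0` the integrands no longer depend on `u`, so `(p + q + 1) φ 0 = 1`, the weight
at `0`, which is below every average.
-/

open MeasureTheory Set

theorem MonotoneOn.Ici_of_Ioi {α β : Type*} [LinearOrder α] [Preorder β] {f : α → β} {a : α}
    (hf : MonotoneOn f (Ioi a)) (ha : ∀ x ∈ Ioi a, f a ≤ f x) : MonotoneOn f (Ici a) := by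
  intro x hx y hy hxy
  rcases (mem_Ici.1 hx).eq_or_lt with rfl | hax
  · rcases (mem_Ici.1 hy).eq_or_lt with rfl | hay
    · exact le_rfl
    · exact ha y hay
  · exact hf hax (hax.trans_le hxy) hxy

theorem ContinuousOn.intervalIntegrable_of_Ici {f : ℝ → ℝ} {a u v : ℝ}
    (hf : ContinuousOn f (Ici a)) (hu : a ≤ u) (hv : a ≤ v) :
    IntervalIntegrable f volume u v :=
  (hf.mono fun _ ht => (le_inf hu hv).trans ht.1).intervalIntegrable

theorem setIntegral_Ioo_pow_mul_comp_mul (k : ℕ) (h : ℝ → ℝ) {u : ℝ} (hu : u ≠ 0) :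
    ∫ y in Ioo (0 : ℝ) 1, y ^ k * h (y * u) = u⁻¹ ^ (k + 1) * ∫ t in 0..u, t ^ k * h t := by
  have hrescale : ∀ y : ℝ, y ^ k * h (y * u) = u⁻¹ ^ k * ((y * u) ^ k * h (y * u)) := by
    intro y
    rw [mul_pow, ← mul_assoc, ← mul_assoc, mul_comm (u⁻¹ ^ k), mul_assoc (y ^ k), ← mul_pow,
      inv_mul_cancel₀ hu, one_pow, mul_one]
  rw [← integral_Ioc_eq_integral_Ioo, ← intervalIntegral.integral_of_le zero_le_one]
  simp_rw [hrescale]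
  rw [intervalIntegral.integral_const_mul,
    intervalIntegral.integral_comp_mul_right (fun t => t ^ k * h t) hu, zero_mul, one_mul,
    smul_eq_mul, ← mul_assoc, pow_succ]

theorem setIntegral_Ioo_div_setIntegral_Ioo_comp_mul (k : ℕ) (h₁ h₂ : ℝ → ℝ) {u : ℝ}
    (hu : u ≠ 0) :
    (∫ y in Ioo (0 : ℝ) 1, y ^ k * h₁ (y * u)) / (∫ y in Ioo (0 : ℝ) 1, y ^ k * h₂ (y * u)) =
      (∫ t in 0..u, t ^ k * h₁ t) / ∫ t in 0..u, t ^ k * h₂ t := by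
  rw [setIntegral_Ioo_pow_mul_comp_mul k h₁ hu, setIntegral_Ioo_pow_mul_comp_mul k h₂ hu,
    mul_div_mul_left _ _ (pow_ne_zero _ (inv_ne_zero hu))]

theorem setIntegral_Ioo_zero_one_pow (k : ℕ) : ∫ y in Ioo (0 : ℝ) 1, y ^ k = 1 / (k + 1) := by
  rw [← integral_Ioc_eq_integral_Ioo, ← intervalIntegral.integral_of_le zero_le_one,
    integral_pow, one_pow, zero_pow (Nat.succ_ne_zero _), sub_zero]

theorem continuousOn_pow_mul_add_one_zpow (k : ℕ) (m : ℤ) :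
    ContinuousOn (fun t : ℝ => t ^ k * (t + 1) ^ m) (Ici 0) :=
  (continuousOn_pow k).mul <| (continuousOn_id.add continuousOn_const).zpow₀ m fun t ht =>
    Or.inl (by dsimp; linarith [mem_Ici.1 ht])

theorem pow_mul_add_one_zpow_add_one {t : ℝ} (ht : 0 ≤ t) (k : ℕ) (m : ℤ) :
    t ^ k * (t + 1) ^ (m + 1) = (t + 1) * (t ^ k * (t + 1) ^ m) := by
  rw [zpow_add_one₀ (by positivity)]
  ring

section WeightedAverage

variable {w g : ℝ → ℝ} {a u v : ℝ}

theorem mul_integral_le_integral_mul_of_monotoneOn (huv : u ≤ v) (hw : MonotoneOn w (Icc u v))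
    (hg : ∀ t ∈ Ioo u v, 0 ≤ g t) (hgi : IntervalIntegrable g volume u v)
    (hwgi : IntervalIntegrable (fun t => w t * g t) volume u v) :
    w u * ∫ t in u..v, g t ≤ ∫ t in u..v, w t * g t := by
  rw [← intervalIntegral.integral_const_mul]
  exact intervalIntegral.integral_mono_on_of_le_Ioo huv (hgi.const_mul _) hwgi fun t ht =>
    mul_le_mul_of_nonneg_right (hw (left_mem_Icc.2 huv) (Ioo_subset_Icc_self ht) ht.1.le)
      (hg t ht)

theorem integral_mul_le_mul_integral_of_monotoneOn (huv : u ≤ v) (hw : MonotoneOn w (Icc u v))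
    (hg : ∀ t ∈ Ioo u v, 0 ≤ g t) (hgi : IntervalIntegrable g volume u v)
    (hwgi : IntervalIntegrable (fun t => w t * g t) volume u v) :
    ∫ t in u..v, w t * g t ≤ w v * ∫ t in u..v, g t := by
  rw [← intervalIntegral.integral_const_mul]
  exact intervalIntegral.integral_mono_on_of_le_Ioo huv hwgi (hgi.const_mul _) fun t ht =>
    mul_le_mul_of_nonneg_right (hw (Ioo_subset_Icc_self ht) (right_mem_Icc.2 huv) ht.2.le)
      (hg t ht)

theorem le_integral_mul_div_integral (hw : ContinuousOn w (Ici a))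
    (hw_mono : MonotoneOn w (Ici a)) (hg : ContinuousOn g (Ici a))
    (hg_pos : ∀ t ∈ Ioi a, 0 < g t) (hu : a < u) :
    w a ≤ (∫ t in a..u, w t * g t) / ∫ t in a..u, g t := by
  rw [le_div_iff₀ (intervalIntegral.intervalIntegral_pos_of_pos_on
    (hg.intervalIntegrable_of_Ici le_rfl hu.le) (fun t ht => hg_pos t ht.1) hu)]
  exact mul_integral_le_integral_mul_of_monotoneOn hu.le (hw_mono.mono Icc_subset_Ici_self)
    (fun t ht => (hg_pos t ht.1).le) (hg.intervalIntegrable_of_Ici le_rfl hu.le)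
    ((hw.mul hg).intervalIntegrable_of_Ici le_rfl hu.le)

theorem monotoneOn_integral_mul_div_integral (hw : ContinuousOn w (Ici a))
    (hw_mono : MonotoneOn w (Ici a)) (hg : ContinuousOn g (Ici a))
    (hg_pos : ∀ t ∈ Ioi a, 0 < g t) :
    MonotoneOn (fun u => (∫ t in a..u, w t * g t) / ∫ t in a..u, g t) (Ioi a) := by
  intro u hu v hv huv
  have hwg : ContinuousOn (fun t => w t * g t) (Ici a) := hw.mul hg
  have hG : ∀ x ∈ Ioi a, 0 < ∫ t in a..x, g t := fun x hx =>
    intervalIntegral.intervalIntegral_pos_of_pos_on (hg.intervalIntegrable_of_Ici le_rfl hx.le)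
      (fun t ht => hg_pos t ht.1) hx
  have hg_nonneg : ∀ t ∈ Ici u, 0 ≤ g t := fun t ht =>
    (hg_pos t (mem_Ioi.2 (lt_of_lt_of_le hu ht))).le
  have hF_split := intervalIntegral.integral_add_adjacent_intervals
    (hwg.intervalIntegrable_of_Ici le_rfl hu.le) (hwg.intervalIntegrable_of_Ici hu.le hv.le)
  have hG_split := intervalIntegral.integral_add_adjacent_intervals
    (hg.intervalIntegrable_of_Ici le_rfl hu.le) (hg.intervalIntegrable_of_Ici hu.le hv.le)
  have h_old : (∫ t in a..u, w t * g t) ≤ w u * ∫ t in a..u, g t :=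
    integral_mul_le_mul_integral_of_monotoneOn hu.le (hw_mono.mono Icc_subset_Ici_self)
      (fun t ht => (hg_pos t ht.1).le) (hg.intervalIntegrable_of_Ici le_rfl hu.le)
      (hwg.intervalIntegrable_of_Ici le_rfl hu.le)
  have h_new : w u * (∫ t in u..v, g t) ≤ ∫ t in u..v, w t * g t :=
    mul_integral_le_integral_mul_of_monotoneOn huv
      (hw_mono.mono fun t ht => hu.le.trans ht.1) (fun t ht => hg_nonneg t ht.1.le)
      (hg.intervalIntegrable_of_Ici hu.le hv.le) (hwg.intervalIntegrable_of_Ici hu.le hv.le)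
  have h_added : 0 ≤ ∫ t in u..v, g t :=
    intervalIntegral.integral_nonneg huv fun t ht => hg_nonneg t ht.1
  dsimp only
  rw [div_le_div_iff₀ (hG u hu) (hG v hv), ← hF_split, ← hG_split]
  nlinarith [mul_le_mul_of_nonneg_right h_old h_added,
    mul_le_mul_of_nonneg_left h_new (hG u hu).le]

end WeightedAverage

theorem stmt8_general (p q : ℕ)
    (φ : ℝ → ℝ)
    (hφ : ∀ u : ℝ, φ u = (1 / ((p : ℝ) + q + 1)) *
      (∫ y in Set.Ioo (0 : ℝ) 1, y ^ (q - 1) * (y * u + 1) ^ (-((p : ℤ) + q + 1))) /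
      (∫ y in Set.Ioo (0 : ℝ) 1, y ^ (q - 1) * (y * u + 1) ^ (-((p : ℤ) + q + 2)))) :
    φ 0 = 1 / ((p : ℝ) + q + 1) ∧ MonotoneOn φ (Set.Ici 0) := by
  set c : ℝ := 1 / ((p : ℝ) + q + 1)
  set m : ℤ := -((p : ℤ) + q + 2)
  set g : ℝ → ℝ := fun t => t ^ (q - 1) * (t + 1) ^ m
  have hg_pos : ∀ t ∈ Ioi (0 : ℝ), 0 < g t := fun t (ht : 0 < t) => by positivity
  have hφ_pos : ∀ u ∈ Ioi (0 : ℝ),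
      φ u = c * ((∫ t in 0..u, (t + 1) * g t) / ∫ t in 0..u, g t) := by
    intro u (hu : 0 < u)
    rw [hφ, mul_div_assoc, setIntegral_Ioo_div_setIntegral_Ioo_comp_mul (q - 1)
      (fun t => (t + 1) ^ (-((p : ℤ) + q + 1))) (fun t => (t + 1) ^ m) hu.ne',
      show -((p : ℤ) + q + 1) = m + 1 by ring]
    congr 2
    refine intervalIntegral.integral_congr fun t ht => ?_
    rw [uIcc_of_le hu.le] at ht
    exact pow_mul_add_one_zpow_add_one ht.1 _ _
  have hφ_zero : φ 0 = c := by
    simp only [hφ, mul_zero, zero_add, one_zpow, mul_one, mul_div_assoc,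
      setIntegral_Ioo_zero_one_pow]
    rw [div_self (by positivity), mul_one]
  have hw : ContinuousOn (fun t : ℝ => t + 1) (Ici 0) := by fun_prop
  have hw_mono : MonotoneOn (fun t : ℝ => t + 1) (Ici 0) := (monotone_id.add_const 1).monotoneOn _
  have hg := continuousOn_pow_mul_add_one_zpow (q - 1) m
  refine ⟨hφ_zero, MonotoneOn.Ici_of_Ioi (fun u hu v hv huv => ?_) fun v hv => ?_⟩
  · rw [hφ_pos u hu, hφ_pos v hv]
    exact mul_le_mul_of_nonneg_left
      (monotoneOn_integral_mul_div_integral hw hw_mono hg hg_pos hu hv huv) (by positivity)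
  · rw [hφ_zero, hφ_pos v hv]
    refine le_mul_of_one_le_right (by positivity) ?_
    simpa using le_integral_mul_div_integral hw hw_mono hg hg_pos hv

/-- The boundary function φ of the Kubokawa class under quadratic loss satisfies
φ(0) = 1/(p+q+1) and is nondecreasing on [0,∞). -/
theorem stmt8 (p q : ℕ) (hp : 1 ≤ p) (hq : 1 ≤ q)
    (φ : ℝ → ℝ)
    (hφ : ∀ u : ℝ, φ u = (1 / ((p : ℝ) + q + 1)) *
      (∫ y in Set.Ioo (0 : ℝ) 1, y ^ (q - 1) * (y * u + 1) ^ (-((p : ℤ) + q + 1))) /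
      (∫ y in Set.Ioo (0 : ℝ) 1, y ^ (q - 1) * (y * u + 1) ^ (-((p : ℤ) + q + 2)))) :
    φ 0 = 1 / ((p : ℝ) + q + 1) ∧ MonotoneOn φ (Set.Ici 0) :=
  stmt8_general p q φ hφ
end

section
/- Let V₁ ~ Gamma(p, 1/σ₁) and V₂ ~ Gamma(q, 1/σ₂) be independent with σ₁ ≤ σ₂. Then V₂/σ₁ has the same distribution as a Gamma(q + L, 1) random variable, where L is an independent negative binomial random variable with parameters q and success probability σ₁/σ₂ (i.e., P(L = l) = C(q+l−1, l)(1 − σ₁/σ₂)^l (σ₁/σ₂)^q for l = 0, 1, 2, …). -/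
open MeasureTheory Set ProbabilityTheory
open Real
open scoped ENNReal Nat

/-! Dividing by `σ₁` turns Gamma(q, 1/σ₂) into Gamma(q, θ) with `θ = σ₁ / σ₂ ≤ 1`. Writing
`e^{-θx} = e^{-x} e^{(1-θ)x}` and expanding the second factor as an exponential series gives
`θ^q x^{q-1} e^{-θx} / (q-1)! = ∑ₗ C(q+l-1, l) (1-θ)^l θ^q · x^{q+l-1} e^{-x} / (q+l-1)!`,
i.e. the Gamma(q, θ) density is the negative binomial mixture of the Gamma(q+l, 1) densities. -/

lemma withDensity_map_div_const {f : ℝ → ℝ≥0∞} (hf : Measurable f) {c : ℝ} (hc : 0 < c) :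
    ((volume : Measure ℝ).withDensity f).map (· / c) =
      (volume : Measure ℝ).withDensity fun y => ENNReal.ofReal c * f (c * y) := by
  have hdiv : Measurable fun v : ℝ => v / c := measurable_id.div_const c
  ext s hs
  have hpre : (c * ·) ⁻¹' ((· / c) ⁻¹' s) = s := by
    ext y; simp [mul_div_cancel_left₀ y hc.ne']
  rw [Measure.map_apply hdiv hs, withDensity_apply _ (hdiv hs), withDensity_apply _ hs]
  conv_lhs => rw [← Real.smul_map_volume_mul_left hc.ne']
  rw [Measure.restrict_smul, lintegral_smul_measure,
    setLIntegral_map (hdiv hs) hf (measurable_const_mul c), hpre, abs_of_pos hc, smul_eq_mul,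
    lintegral_const_mul' _ _ ENNReal.ofReal_ne_top]

lemma mul_gammaPDFReal_mul {a r c : ℝ} (hr : 0 ≤ r) (hc : 0 < c) (y : ℝ) :
    c * gammaPDFReal a r (c * y) = gammaPDFReal a (c * r) y := by
  rcases lt_or_ge y 0 with hy | hy
  · simp [gammaPDFReal, hy.not_ge, (mul_neg_of_pos_of_neg hc hy).not_ge]
  · simp only [gammaPDFReal, if_pos hy, if_pos (mul_nonneg hc.le hy)]
    rw [mul_rpow hc.le hr, mul_rpow hc.le hy, rpow_sub_one hc.ne']
    field_simp

lemma gammaMeasure_map_div_const (a : ℝ) {r c : ℝ} (hr : 0 ≤ r) (hc : 0 < c) :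
    (gammaMeasure a r).map (· / c) = gammaMeasure a (c * r) := by
  unfold gammaMeasure gammaPDF
  rw [withDensity_map_div_const (measurable_gammaPDFReal a r).ennreal_ofReal hc]
  simp_rw [← ENNReal.ofReal_mul hc.le, mul_gammaPDFReal_mul hr hc]

lemma gammaPDFReal_natCast_add_one (n : ℕ) (r : ℝ) {x : ℝ} (hx : 0 ≤ x) :
    gammaPDFReal (n + 1) r x = r ^ (n + 1) / n ! * x ^ n * exp (-(r * x)) := by
  rw [gammaPDFReal, if_pos hx, add_sub_cancel_right, Gamma_nat_eq_factorial,
    ← Nat.cast_add_one, rpow_natCast, rpow_natCast]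

lemma hasSum_negBinomial_mul_gammaPDFReal {q : ℕ} (hq : 1 ≤ q) (θ x : ℝ) :
    HasSum (fun l : ℕ => (q + l - 1).choose l * (1 - θ) ^ l * θ ^ q * gammaPDFReal (q + l) 1 x)
      (gammaPDFReal q θ x) := by
  obtain ⟨m, rfl⟩ : ∃ m, q = m + 1 := ⟨q - 1, by omega⟩
  rcases lt_or_ge x 0 with hx | hx
  · simp [gammaPDFReal, hx.not_ge, hasSum_zero]
  have hshape (l : ℕ) : (m : ℝ) + 1 + l = ((m + l : ℕ) : ℝ) + 1 := by push_cast; ring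
  have hsub (l : ℕ) : m + 1 + l - 1 = m + l := by omega
  simp only [Nat.cast_add_one, hshape, hsub, gammaPDFReal_natCast_add_one _ _ hx]
  convert! (NormedSpace.expSeries_div_hasSum_exp ((1 - θ) * x)).mul_left
    (θ ^ (m + 1) * x ^ m * exp (-x) / m !) using 1
  · funext l
    have hchoose : ((m + l).choose l : ℝ) * m ! * l ! = (m + l)! := by
      exact_mod_cast Nat.add_choose_mul_factorial_mul_factorial m l
    field_simp
    rw [← hchoose, mul_pow]
    ring
  · rw [← exp_eq_exp_ℝ, show -(θ * x) = -x + (1 - θ) * x by ring, exp_add]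
    ring

lemma withDensity_ofReal_eq_sum_smul {α ι : Type*} [MeasurableSpace α] [Countable ι]
    {μ : Measure α} {w : ι → ℝ} {f : ι → α → ℝ} {g : α → ℝ} (hw : ∀ i, 0 ≤ w i)
    (hf : ∀ i x, 0 ≤ f i x) (hf_meas : ∀ i, Measurable (f i))
    (hg : ∀ x, HasSum (fun i => w i * f i x) (g x)) :
    μ.withDensity (fun x => ENNReal.ofReal (g x)) =
      Measure.sum fun i => ENNReal.ofReal (w i) • μ.withDensity fun x => ENNReal.ofReal (f i x) := by
  simp_rw [← withDensity_smul' _ _ ENNReal.ofReal_ne_top]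
  rw [← withDensity_tsum fun i => (hf_meas i).ennreal_ofReal.const_smul _]
  congr 1
  funext x
  rw [← (hg x).tsum_eq, ENNReal.ofReal_tsum_of_nonneg (fun i => mul_nonneg (hw i) (hf i x))
    (hg x).summable, tsum_apply (Pi.summable.mpr fun _ => ENNReal.summable)]
  simp [ENNReal.ofReal_mul (hw _)]

lemma gammaMeasure_eq_sum_negBinomial_smul {q : ℕ} (hq : 1 ≤ q) {θ : ℝ} (hθ₀ : 0 ≤ θ)
    (hθ₁ : θ ≤ 1) :
    gammaMeasure q θ = Measure.sum fun l : ℕ =>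
      ENNReal.ofReal ((q + l - 1).choose l * (1 - θ) ^ l * θ ^ q) • gammaMeasure (q + l) 1 :=
  withDensity_ofReal_eq_sum_smul (fun _ => by have := sub_nonneg.2 hθ₁; positivity)
    (fun l => gammaPDFReal_nonneg (add_pos_of_pos_of_nonneg (Nat.cast_pos.2 hq) l.cast_nonneg)
      one_pos)
    (fun _ => measurable_gammaPDFReal _ _) (hasSum_negBinomial_mul_gammaPDFReal hq θ)

/-- Mixture representation: if V₂ ~ Gamma(q, 1/σ₂) and σ₁ ≤ σ₂, then V₂/σ₁ is distributed as
Gamma(q+L, 1) where L ~ NegBin(q, 1 - σ₁/σ₂), i.e. the law of V₂/σ₁ is the negative-binomial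
mixture of the Gamma(q+l, 1) laws. -/
theorem stmt10 (q : ℕ) (hq : 1 ≤ q) (σ₁ σ₂ : ℝ) (h1 : 0 < σ₁) (h12 : σ₁ ≤ σ₂) :
    (gammaMeasure q (1 / σ₂)).map (fun v => v / σ₁) =
      Measure.sum (fun l : ℕ =>
        (ENNReal.ofReal
            ((Nat.choose (q + l - 1) l : ℝ) * (1 - σ₁ / σ₂) ^ l * (σ₁ / σ₂) ^ q)) •
          gammaMeasure (q + l) 1) := by
  have h2 : 0 < σ₂ := h1.trans_le h12
  rw [gammaMeasure_map_div_const _ (one_div_pos.2 h2).le h1, mul_one_div]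
  exact gammaMeasure_eq_sum_negBinomial_smul hq (div_pos h1 h2).le ((div_le_one h2).2 h12)
end

section
/- Fix α₂ > 0, an integer N ≥ 2, ε > 0, and 0 < r ≤ 1/(1+ε). Then the function f(u) = α₂ N u^{ε+1} + (1/r) ln(1 − r u^{ε}) on (0,1], under the additional assumption f(1) > 0, has exactly one sign change on (0,1]: there exists u₀ ∈ (0,1) with f(u) < 0 for 0 < u < u₀ and f(u) > 0 for u₀ < u ≤ 1. -/
open Set

/-- Lemma 7 of the paper: f(u) = α₂ N u^{ε+1} + (1/r) ln(1 - r u^ε) with 0 < r ≤ 1/(1+ε) and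
f(1) > 0 changes sign exactly once on (0,1], from negative to positive. -/
theorem stmt12 (α₂ : ℝ) (hα : 0 < α₂) (N : ℕ) (hN : 2 ≤ N) (ε r : ℝ) (hε : 0 < ε)
    (hr0 : 0 < r) (hr : r ≤ 1 / (1 + ε))
    (f : ℝ → ℝ)
    (hf : ∀ u : ℝ, f u = α₂ * N * u ^ (ε + 1) + (1 / r) * Real.log (1 - r * u ^ ε))
    (hf1 : 0 < f 1) :
    ∃ u₀ ∈ Set.Ioo (0 : ℝ) 1,
      (∀ u : ℝ, 0 < u → u < u₀ → f u < 0) ∧ (∀ u : ℝ, u₀ < u → u ≤ 1 → 0 < f u) := by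
  have hNpos : (0:ℝ) < N := by positivity
  set K : ℝ := α₂ * N with hK
  have hKpos : 0 < K := by positivity
  have hε1 : (0:ℝ) < ε + 1 := by linarith
  have hrε : r * (ε + 1) ≤ 1 := by
    have := (le_div_iff₀ (by linarith : (0:ℝ) < 1 + ε)).mp hr
    nlinarith
  have hr1 : r < 1 := by nlinarith
  -- the denominator 1 - r u^ε is positive on [0,1]
  have hden : ∀ u : ℝ, 0 ≤ u → u ≤ 1 → 0 < 1 - r * u ^ ε := by
    intro u hu hu1
    have h1 : u ^ ε ≤ 1 := Real.rpow_le_one hu hu1 hε.le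
    have h0 : 0 ≤ u ^ ε := Real.rpow_nonneg hu ε
    nlinarith
  -- f 0 = 0
  have hf0 : f 0 = 0 := by
    rw [hf, Real.zero_rpow (by positivity), Real.zero_rpow hε.ne']
    simp
  -- continuity of f on [0,1]
  have hcf : ContinuousOn f (Icc 0 1) := by
    have : ContinuousOn (fun u : ℝ => α₂ * N * u ^ (ε + 1)
        + (1 / r) * Real.log (1 - r * u ^ ε)) (Icc 0 1) := by
      apply ContinuousOn.add
      · exact continuousOn_const.mul (fun x hx =>
          (Real.continuousAt_rpow_const x (ε+1) (Or.inr (by positivity))).continuousWithinAt)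
      · apply continuousOn_const.mul
        apply ContinuousOn.log
        · exact continuousOn_const.sub (continuousOn_const.mul (fun x hx =>
            (Real.continuousAt_rpow_const x ε (Or.inr hε.le)).continuousWithinAt))
        · intro x hx
          exact (hden x hx.1 hx.2).ne'
    exact this.congr (fun x _ => hf x)
  -- the derivative of f on (0,1)
  set φ : ℝ → ℝ := fun u =>
    (u ^ (ε - 1) / (1 - r * u ^ ε)) * ((ε + 1) * K * (u - r * u ^ (ε + 1)) - ε) with hφ
  have hderiv : ∀ u ∈ Ioo (0:ℝ) 1, HasDerivAt f (φ u) u := by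
    intro u hu
    have hu0 : 0 < u := hu.1
    have hd : 0 < 1 - r * u ^ ε := hden u hu0.le hu.2.le
    have h1 : HasDerivAt (fun x : ℝ => x ^ (ε + 1)) ((ε + 1) * u ^ ε) u := by
      have := Real.hasDerivAt_rpow_const (x := u) (p := ε + 1) (Or.inl hu0.ne')
      simpa using this
    have h2 : HasDerivAt (fun x : ℝ => x ^ ε) (ε * u ^ (ε - 1)) u :=
      Real.hasDerivAt_rpow_const (x := u) (p := ε) (Or.inl hu0.ne')
    have h3 : HasDerivAt (fun x : ℝ => 1 - r * x ^ ε) (-(r * (ε * u ^ (ε - 1)))) u :=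
      (h2.const_mul r).const_sub 1
    have h4 : HasDerivAt (fun x : ℝ => Real.log (1 - r * x ^ ε))
        (-(r * (ε * u ^ (ε - 1))) / (1 - r * u ^ ε)) u := h3.log hd.ne'
    have h5 : HasDerivAt (fun x : ℝ => α₂ * N * x ^ (ε + 1)
        + (1 / r) * Real.log (1 - r * x ^ ε))
        (α₂ * N * ((ε + 1) * u ^ ε) + (1 / r) * (-(r * (ε * u ^ (ε - 1))) / (1 - r * u ^ ε))) u :=
      (h1.const_mul (α₂ * N)).add (h4.const_mul (1 / r))
    have hfe : f = fun x : ℝ => α₂ * N * x ^ (ε + 1) + (1 / r) * Real.log (1 - r * x ^ ε) :=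
      funext hf
    rw [hfe]
    convert h5 using 1
    -- algebraic identity for the derivative
    have e1 : u ^ ε = u ^ (ε - 1) * u := by
      rw [← Real.rpow_add_one hu0.ne' (ε - 1)]; ring_nf
    have e2 : u ^ (ε + 1) = u ^ ε * u := by
      rw [← Real.rpow_add_one hu0.ne' ε]
    have hd' : 1 - r * (u ^ (ε - 1) * u) ≠ 0 := by rw [← e1]; exact hd.ne'
    rw [hφ]
    simp only []
    rw [e2, e1]
    rw [hK]
    generalize u ^ (ε - 1) = X at hd' ⊢
    have hDi : (1 - r * (X * u)) * (1 - r * (X * u))⁻¹ = 1 := mul_inv_cancel₀ hd'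
    have hri : r * r⁻¹ = 1 := mul_inv_cancel₀ hr0.ne'
    linear_combination ((ε + 1) * (α₂ * N) * X * u) * hDi + (ε * X * (1 - r * (X * u))⁻¹) * hri
  -- w is strictly increasing on [0,1]
  set w : ℝ → ℝ := fun u => u - r * u ^ (ε + 1) with hw
  have hcw : ContinuousOn w (Icc 0 1) := by
    exact continuousOn_id.sub (continuousOn_const.mul (fun x hx =>
      (Real.continuousAt_rpow_const x (ε+1) (Or.inr (by positivity))).continuousWithinAt))
  have hwmono : StrictMonoOn w (Icc 0 1) := by
    apply strictMonoOn_of_deriv_pos (convex_Icc 0 1) hcw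
    intro x hx
    rw [interior_Icc] at hx
    have hx0 : 0 < x := hx.1
    have hD : HasDerivAt w (1 - r * ((ε + 1) * x ^ ε)) x := by
      have h1 : HasDerivAt (fun y : ℝ => y ^ (ε + 1)) ((ε + 1) * x ^ ε) x := by
        have := Real.hasDerivAt_rpow_const (x := x) (p := ε + 1) (Or.inl hx0.ne')
        simpa using this
      exact (hasDerivAt_id x).sub ((h1.const_mul r))
    rw [hD.deriv]
    have h1 : x ^ ε < 1 := Real.rpow_lt_one hx0.le hx.2 hε
    have h0 : 0 ≤ x ^ ε := Real.rpow_nonneg hx0.le ε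
    nlinarith
  have hw0 : w 0 = 0 := by
    rw [hw]; simp [Real.zero_rpow (show ε + 1 ≠ 0 by positivity)]
  -- sign of φ in terms of w
  set B : ℝ := ε / ((ε + 1) * K) with hB
  have hBpos : 0 < B := by positivity
  have hsign_neg : ∀ u ∈ Ioo (0:ℝ) 1, w u < B → φ u < 0 := by
    intro u hu hwu
    have hd : 0 < 1 - r * u ^ ε := hden u hu.1.le hu.2.le
    have hpre : 0 < u ^ (ε - 1) / (1 - r * u ^ ε) :=
      div_pos (Real.rpow_pos_of_pos hu.1 _) hd
    have key : (ε + 1) * K * B = ε := by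
      rw [hB]; field_simp
    have hm := mul_lt_mul_of_pos_left hwu (by positivity : 0 < (ε + 1) * K)
    have hwu' : (ε + 1) * K * (u - r * u ^ (ε + 1)) - ε < 0 := by
      have h2 : (ε + 1) * K * w u < ε := by linarith [hm, key]
      have h3 : w u = u - r * u ^ (ε + 1) := rfl
      rw [h3] at h2
      linarith
    exact mul_neg_of_pos_of_neg hpre hwu'
  have hsign_pos : ∀ u ∈ Ioo (0:ℝ) 1, B < w u → 0 < φ u := by
    intro u hu hwu
    have hd : 0 < 1 - r * u ^ ε := hden u hu.1.le hu.2.le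
    have hpre : 0 < u ^ (ε - 1) / (1 - r * u ^ ε) :=
      div_pos (Real.rpow_pos_of_pos hu.1 _) hd
    have key : (ε + 1) * K * B = ε := by
      rw [hB]; field_simp
    have hm := mul_lt_mul_of_pos_left hwu (by positivity : 0 < (ε + 1) * K)
    have hwu' : 0 < (ε + 1) * K * (u - r * u ^ (ε + 1)) - ε := by
      have h2 : ε < (ε + 1) * K * w u := by linarith [hm, key]
      have h3 : w u = u - r * u ^ (ε + 1) := rfl
      rw [h3] at h2
      linarith
    exact mul_pos hpre hwu'
  -- B < w 1, otherwise f would be strictly decreasing, contradicting f 1 > 0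
  have hw1 : B < w 1 := by
    by_contra hcon
    push_neg at hcon
    have hanti : StrictAntiOn f (Icc 0 1) := by
      apply strictAntiOn_of_deriv_neg (convex_Icc 0 1) hcf
      intro x hx
      rw [interior_Icc] at hx
      rw [(hderiv x hx).deriv]
      exact hsign_neg x hx (lt_of_lt_of_le
        (hwmono (Ioo_subset_Icc_self hx) (right_mem_Icc.mpr zero_le_one) hx.2) hcon)
    have := hanti (left_mem_Icc.mpr zero_le_one) (right_mem_Icc.mpr zero_le_one) zero_lt_one
    rw [hf0] at this
    linarith
  -- c : the point where w crosses B
  obtain ⟨c, hc, hwc⟩ : ∃ c ∈ Ioo (0:ℝ) 1, w c = B := by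
    have := intermediate_value_Ioo (zero_le_one) hcw
    have hmem : B ∈ Ioo (w 0) (w 1) := by rw [hw0]; exact ⟨hBpos, hw1⟩
    obtain ⟨c, hc, hwc⟩ := this hmem
    exact ⟨c, hc, hwc⟩
  -- f is strictly decreasing on [0,c]
  have hanti : StrictAntiOn f (Icc 0 c) := by
    apply strictAntiOn_of_deriv_neg (convex_Icc 0 c)
      (hcf.mono (Icc_subset_Icc le_rfl hc.2.le))
    intro x hx
    rw [interior_Icc] at hx
    have hx' : x ∈ Ioo (0:ℝ) 1 := ⟨hx.1, hx.2.trans hc.2⟩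
    rw [(hderiv x hx').deriv]
    apply hsign_neg x hx'
    have h := hwmono (Ioo_subset_Icc_self hx') (Ioo_subset_Icc_self hc) hx.2
    rwa [hwc] at h
  have hfneg : ∀ u : ℝ, 0 < u → u ≤ c → f u < 0 := by
    intro u hu huc
    have := hanti (left_mem_Icc.mpr hc.1.le) ⟨hu.le, huc⟩ hu
    rwa [hf0] at this
  -- f is strictly increasing on [c,1]
  have hmono : StrictMonoOn f (Icc c 1) := by
    apply strictMonoOn_of_deriv_pos (convex_Icc c 1)
      (hcf.mono (Icc_subset_Icc hc.1.le le_rfl))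
    intro x hx
    rw [interior_Icc] at hx
    have hx' : x ∈ Ioo (0:ℝ) 1 := ⟨hc.1.trans hx.1, hx.2⟩
    rw [(hderiv x hx').deriv]
    apply hsign_pos x hx'
    have h := hwmono (Ioo_subset_Icc_self hc) (Ioo_subset_Icc_self hx') hx.1
    rwa [hwc] at h
  -- find the zero u₀ of f in (c,1)
  have hfc : f c < 0 := hfneg c hc.1 le_rfl
  obtain ⟨u₀, hu₀, hfu₀⟩ : ∃ u₀ ∈ Ioo c 1, f u₀ = 0 := by
    have := intermediate_value_Ioo hc.2.le (hcf.mono (Icc_subset_Icc hc.1.le le_rfl))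
    have hmem : (0:ℝ) ∈ Ioo (f c) (f 1) := ⟨hfc, hf1⟩
    obtain ⟨u₀, hu₀, h⟩ := this hmem
    exact ⟨u₀, hu₀, h⟩
  refine ⟨u₀, ⟨hc.1.trans hu₀.1, hu₀.2⟩, ?_, ?_⟩
  · intro u hu huu₀
    rcases le_or_gt u c with h | h
    · exact hfneg u hu h
    · have := hmono ⟨h.le, (huu₀.trans hu₀.2).le⟩ (Ioo_subset_Icc_self hu₀) huu₀
      rwa [hfu₀] at this
  · intro u huu₀ hu1
    have := hmono (Ioo_subset_Icc_self hu₀) ⟨(hu₀.1.trans huu₀).le, hu1⟩ huu₀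
    rwa [hfu₀] at this
end

section
/- Let V₁ ~ Gamma(p, 1/σ₁) and V₂ ~ Gamma(q, 1/σ₂) be independent, with p, q ≥ 2 integers and σ₁ ≤ σ₂ unknown. Consider estimating σ₁ under quadratic loss L(δ/σ₁) = (δ/σ₁ − 1)². Let δ₀ = V₁/(p+1) and define δ_S = min{V₁/(p+1), (V₁+V₂)/(p+q+1)}. Then R(σ, δ_S) ≤ R(σ, δ₀) for all σ₁ ≤ σ₂, with strict inequality for some parameter values. -/
/-!
Both estimators are scale equivariant, so in the coordinates `V₁ = v`, `V₂ = z v` the risk becomes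
`∫ z ^ (q - 1) K_z (δ(1, z) / σ₁) dz` with
`K_z(a) = ∫ (a v - 1)² v ^ (p + q - 1) exp (-(1 / σ₁ + z / σ₂) v) dv`.
Each `K_z` is a convex quadratic in `a`, minimised at `(1 / σ₁ + z / σ₂) / (p + q + 1)`. As
`σ₁ ≤ σ₂`, this minimiser lies below the pooled value `(1 + z) / ((p + q + 1) σ₁)` at which `δ_S`
truncates `δ₀`, so the truncation lowers every `K_z`, strictly when `z < q / (p + 1)`.
-/

open MeasureTheory Set Real
open scoped Nat

noncomputable section

lemma integrableOn_pow_mul_exp_neg_mul_Ioi (n : ℕ) {l : ℝ} (hl : 0 < l) :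
    IntegrableOn (fun x : ℝ => x ^ n * exp (-l * x)) (Ioi 0) := by
  refine (integrableOn_rpow_mul_exp_neg_mul_rpow (s := n) (p := 1)
    (by linarith [(n.cast_nonneg : (0:ℝ) ≤ n)]) one_pos hl).congr_fun (fun x _ => ?_)
    measurableSet_Ioi
  simp only [rpow_one, rpow_natCast]

lemma integral_pow_mul_exp_neg_mul_Ioi (n : ℕ) {l : ℝ} (hl : 0 < l) :
    ∫ x in Ioi (0:ℝ), x ^ n * exp (-l * x) = n ! / l ^ (n + 1) := by
  have h := integral_rpow_mul_exp_neg_mul_Ioi (a := n + 1) (by positivity) hl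
  rw [add_sub_cancel_right, Gamma_nat_eq_factorial, ← Nat.cast_succ, rpow_natCast] at h
  rw [div_eq_mul_one_div, mul_comm, ← one_div_pow, ← h]
  exact setIntegral_congr_fun measurableSet_Ioi (fun x _ => by simp [neg_mul])

def gammaQuadRisk (n : ℕ) (l a : ℝ) : ℝ :=
  ∫ v in Ioi (0:ℝ), (a * v - 1) ^ 2 * (v ^ n * exp (-l * v))

section gammaQuadRisk

variable (n : ℕ) {l : ℝ}

lemma integrableOn_sq_sub_one_mul_pow_mul_exp (hl : 0 < l) (a : ℝ) :
    IntegrableOn (fun v : ℝ => (a * v - 1) ^ 2 * (v ^ n * exp (-l * v))) (Ioi 0) := by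
  have hI := integrableOn_pow_mul_exp_neg_mul_Ioi (l := l)
  have h : IntegrableOn (fun v : ℝ => a ^ 2 * (v ^ (n + 2) * exp (-l * v))
      - 2 * a * (v ^ (n + 1) * exp (-l * v)) + v ^ n * exp (-l * v)) (Ioi 0) :=
    (((hI _ hl).const_mul _).sub ((hI _ hl).const_mul _)).add (hI _ hl)
  exact h.congr_fun (fun v _ => by ring) measurableSet_Ioi

lemma gammaQuadRisk_eq (hl : 0 < l) (a : ℝ) :
    gammaQuadRisk n l a =
      a ^ 2 * ((n + 2)! / l ^ (n + 3)) - 2 * a * ((n + 1)! / l ^ (n + 2)) + n ! / l ^ (n + 1) := by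
  have hI := integrableOn_pow_mul_exp_neg_mul_Ioi (l := l)
  have h2 : IntegrableOn (fun v : ℝ => a ^ 2 * (v ^ (n + 2) * exp (-l * v))) (Ioi 0) :=
    (hI _ hl).const_mul _
  have h1 : IntegrableOn (fun v : ℝ => 2 * a * (v ^ (n + 1) * exp (-l * v))) (Ioi 0) :=
    (hI _ hl).const_mul _
  have hsplit : gammaQuadRisk n l a = ∫ v in Ioi (0:ℝ), a ^ 2 * (v ^ (n + 2) * exp (-l * v))
      - 2 * a * (v ^ (n + 1) * exp (-l * v)) + v ^ n * exp (-l * v) :=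
    setIntegral_congr_fun measurableSet_Ioi (fun v _ => by ring)
  have h21 : IntegrableOn (fun v : ℝ => a ^ 2 * (v ^ (n + 2) * exp (-l * v))
      - 2 * a * (v ^ (n + 1) * exp (-l * v))) (Ioi 0) := h2.sub h1
  rw [hsplit, integral_add h21 (hI _ hl), integral_sub h2 h1, integral_const_mul,
    integral_const_mul, integral_pow_mul_exp_neg_mul_Ioi _ hl,
    integral_pow_mul_exp_neg_mul_Ioi _ hl, integral_pow_mul_exp_neg_mul_Ioi _ hl]

lemma gammaQuadRisk_sub (hl : 0 < l) (a b : ℝ) :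
    gammaQuadRisk n l a - gammaQuadRisk n l b =
      (a - b) * ((n + 2) * (a + b) - 2 * l) * ((n + 1)! / l ^ (n + 3)) := by
  rw [gammaQuadRisk_eq n hl, gammaQuadRisk_eq n hl, Nat.factorial_succ (n + 1)]
  field_simp
  push_cast
  ring

end gammaQuadRisk

lemma gammaQuadRisk_le {n : ℕ} {l a b : ℝ} (hl : 0 < l) (hb : l / (n + 2) ≤ b) (hba : b ≤ a) :
    gammaQuadRisk n l b ≤ gammaQuadRisk n l a := by
  have h := gammaQuadRisk_sub n hl a b
  rw [div_le_iff₀ (by positivity)] at hb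
  have : 0 ≤ (a - b) * ((n + 2) * (a + b) - 2 * l) * ((n + 1)! / l ^ (n + 3)) := by
    apply mul_nonneg (mul_nonneg (by linarith) (by nlinarith)) (by positivity)
  linarith

lemma gammaQuadRisk_lt {n : ℕ} {l a b : ℝ} (hl : 0 < l) (hb : l / (n + 2) ≤ b) (hba : b < a) :
    gammaQuadRisk n l b < gammaQuadRisk n l a := by
  have h := gammaQuadRisk_sub n hl a b
  rw [div_le_iff₀ (by positivity)] at hb
  have : 0 < (a - b) * ((n + 2) * (a + b) - 2 * l) * ((n + 1)! / l ^ (n + 3)) := by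
    apply mul_pos (mul_pos (by linarith) (by nlinarith)) (by positivity)
  linarith

lemma gammaQuadRisk_min_le {n : ℕ} {l c : ℝ} (hl : 0 < l) (hc : l / (n + 2) ≤ c) (a : ℝ) :
    gammaQuadRisk n l (min a c) ≤ gammaQuadRisk n l a := by
  rcases le_total a c with h | h
  · rw [min_eq_left h]
  · rw [min_eq_right h]
    exact gammaQuadRisk_le hl hc h

def rayMap (x : ℝ × ℝ) : ℝ × ℝ := (x.2, x.1 * x.2)

def rayMapDeriv (x : ℝ × ℝ) : ℝ × ℝ →L[ℝ] ℝ × ℝ :=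
  (ContinuousLinearMap.snd ℝ ℝ ℝ).prod
    (x.1 • ContinuousLinearMap.snd ℝ ℝ ℝ + x.2 • ContinuousLinearMap.fst ℝ ℝ ℝ)

lemma hasFDerivAt_rayMap (x : ℝ × ℝ) : HasFDerivAt rayMap (rayMapDeriv x) x :=
  hasFDerivAt_snd.prodMk (hasFDerivAt_fst.mul hasFDerivAt_snd)

lemma det_rayMapDeriv (x : ℝ × ℝ) : (rayMapDeriv x).det = -x.2 := by
  rw [ContinuousLinearMap.det, ← LinearMap.det_toMatrix (Module.Basis.finTwoProd ℝ),
    Matrix.det_fin_two]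
  simp [LinearMap.toMatrix_apply, rayMapDeriv]

lemma rayMap_image_quadrant : rayMap '' (Ioi 0 ×ˢ Ioi 0) = Ioi (0:ℝ) ×ˢ Ioi (0:ℝ) := by
  ext ⟨a, b⟩
  simp only [rayMap, mem_image, mem_prod, mem_Ioi, Prod.mk.injEq, Prod.exists]
  constructor
  · rintro ⟨z, v, ⟨hz, hv⟩, rfl, rfl⟩
    exact ⟨hv, mul_pos hz hv⟩
  · rintro ⟨ha, hb⟩
    exact ⟨b / a, a, ⟨div_pos hb ha, ha⟩, rfl, by field_simp⟩

lemma injOn_rayMap : InjOn rayMap (Ioi 0 ×ˢ Ioi 0) := by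
  rintro ⟨z, v⟩ ⟨-, hv⟩ ⟨z', v'⟩ - h
  simp only [rayMap, Prod.mk.injEq] at h
  obtain ⟨rfl, h⟩ := h
  exact Prod.ext (mul_right_cancel₀ (ne_of_gt hv) h) rfl

lemma integral_quadrant_eq_integral_rays {G : ℝ × ℝ → ℝ}
    (hG : IntegrableOn G (Ioi 0 ×ˢ Ioi 0)) :
    (∫ x in Ioi (0:ℝ) ×ˢ Ioi (0:ℝ), G x) =
      ∫ z in Ioi (0:ℝ), ∫ v in Ioi (0:ℝ), v * G (v, z * v) ∧
    IntegrableOn (fun z => ∫ v in Ioi (0:ℝ), v * G (v, z * v)) (Ioi 0) := by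
  have hs : MeasurableSet (Ioi (0:ℝ) ×ˢ Ioi (0:ℝ)) := measurableSet_Ioi.prod measurableSet_Ioi
  have hd : ∀ x ∈ Ioi (0:ℝ) ×ˢ Ioi (0:ℝ),
      HasFDerivWithinAt rayMap (rayMapDeriv x) (Ioi 0 ×ˢ Ioi 0) x :=
    fun x _ => (hasFDerivAt_rayMap x).hasFDerivWithinAt
  have hjac : EqOn (fun x : ℝ × ℝ => |(rayMapDeriv x).det| • G (rayMap x))
      (fun x => x.2 * G (x.2, x.1 * x.2)) (Ioi 0 ×ˢ Ioi 0) := by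
    rintro x ⟨-, hx⟩
    simp [det_rayMapDeriv, rayMap, abs_of_pos (mem_Ioi.mp hx)]
  have hint : IntegrableOn (fun x : ℝ × ℝ => x.2 * G (x.2, x.1 * x.2)) (Ioi 0 ×ˢ Ioi 0) := by
    refine IntegrableOn.congr_fun ?_ hjac hs
    rwa [← integrableOn_image_iff_integrableOn_abs_det_fderiv_smul volume hs hd injOn_rayMap,
      rayMap_image_quadrant]
  constructor
  · rw [← rayMap_image_quadrant, integral_image_eq_integral_abs_det_fderiv_smul volume hs hd
      injOn_rayMap, setIntegral_congr_fun hs hjac, Measure.volume_eq_prod,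
      setIntegral_prod _ hint]
  · rw [IntegrableOn, Measure.volume_eq_prod, ← Measure.prod_restrict] at hint
    exact hint.integral_prod_left

def riskIntegrand (i j : ℕ) (s t : ℝ) (δ : ℝ → ℝ → ℝ) (v : ℝ × ℝ) : ℝ :=
  (δ v.1 v.2 / s - 1) ^ 2 * (v.1 ^ i * exp (-v.1 / s)) * (v.2 ^ j * exp (-v.2 / t))

section riskIntegrand

variable (i j : ℕ) {s t : ℝ}

lemma integrableOn_pow_mul_exp_neg_div_Ioi (hs : 0 < s) :
    IntegrableOn (fun x : ℝ => x ^ i * exp (-x / s)) (Ioi 0) :=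
  (integrableOn_pow_mul_exp_neg_mul_Ioi i (one_div_pos.2 hs)).congr_fun
    (fun x _ => by ring_nf) measurableSet_Ioi

lemma integrableOn_riskIntegrand_div (hs : 0 < s) (ht : 0 < t) (d : ℝ) :
    IntegrableOn (riskIntegrand i j s t fun v₁ _ => v₁ / d) (Ioi 0 ×ˢ Ioi 0) := by
  have h₁ : IntegrableOn (fun x : ℝ => (x / d / s - 1) ^ 2 * (x ^ i * exp (-x / s))) (Ioi 0) :=
    (integrableOn_sq_sub_one_mul_pow_mul_exp i (one_div_pos.2 hs) (1 / d / s)).congr_fun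
      (fun x _ => by ring_nf) measurableSet_Ioi
  rw [IntegrableOn, Measure.volume_eq_prod, ← Measure.prod_restrict]
  exact h₁.mul_prod (integrableOn_pow_mul_exp_neg_div_Ioi j ht)

lemma integrableOn_riskIntegrand_of_le {δ δ' : ℝ → ℝ → ℝ} (hs : 0 < s) (ht : 0 < t)
    (hδ : Continuous (Function.uncurry δ))
    (hδ' : IntegrableOn (riskIntegrand i j s t δ') (Ioi 0 ×ˢ Ioi 0))
    (hle : ∀ v₁ > 0, ∀ v₂ > 0, 0 ≤ δ v₁ v₂ ∧ δ v₁ v₂ ≤ δ' v₁ v₂) :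
    IntegrableOn (riskIntegrand i j s t δ) (Ioi 0 ×ˢ Ioi 0) := by
  have hdens : IntegrableOn
      (fun v : ℝ × ℝ => (v.1 ^ i * exp (-v.1 / s)) * (v.2 ^ j * exp (-v.2 / t)))
      (Ioi 0 ×ˢ Ioi 0) := by
    rw [IntegrableOn, Measure.volume_eq_prod, ← Measure.prod_restrict]
    exact (integrableOn_pow_mul_exp_neg_div_Ioi i hs).mul_prod
      (integrableOn_pow_mul_exp_neg_div_Ioi j ht)
  have hmeas : AEStronglyMeasurable (riskIntegrand i j s t δ)
      (volume.restrict (Ioi 0 ×ˢ Ioi 0)) := by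
    apply Continuous.aestronglyMeasurable
    unfold riskIntegrand
    have : Continuous fun v : ℝ × ℝ => δ v.1 v.2 := hδ
    fun_prop
  refine (hδ'.add hdens).mono' hmeas ?_
  rw [ae_restrict_iff' (measurableSet_Ioi.prod measurableSet_Ioi)]
  refine Filter.Eventually.of_forall fun v ⟨hv₁, hv₂⟩ => ?_
  obtain ⟨h0, h1⟩ := hle v.1 hv₁ v.2 hv₂
  have hloss : (δ v.1 v.2 / s - 1) ^ 2 ≤ (δ' v.1 v.2 / s - 1) ^ 2 + 1 := by
    have hx : 0 ≤ δ v.1 v.2 / s := div_nonneg h0 hs.le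
    have hxy : δ v.1 v.2 / s ≤ δ' v.1 v.2 / s := div_le_div_of_nonneg_right h1 hs.le
    rcases le_total (δ v.1 v.2 / s) 1 with h | h <;> nlinarith
  have hw : 0 ≤ (v.1 ^ i * exp (-v.1 / s)) * (v.2 ^ j * exp (-v.2 / t)) := by
    have := mem_Ioi.1 hv₁; have := mem_Ioi.1 hv₂; positivity
  rw [Real.norm_eq_abs, abs_of_nonneg (by
    rw [riskIntegrand, mul_assoc]; exact mul_nonneg (sq_nonneg _) hw)]
  simp only [riskIntegrand, Pi.add_apply]
  nlinarith [mul_le_mul_of_nonneg_right hloss hw]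

lemma integral_riskIntegrand_eq {δ : ℝ → ℝ → ℝ}
    (hδ : ∀ z > 0, ∀ v > 0, δ v (z * v) = v * δ 1 z)
    (hint : IntegrableOn (riskIntegrand i j s t δ) (Ioi 0 ×ˢ Ioi 0)) :
    (∫ v in Ioi (0:ℝ) ×ˢ Ioi (0:ℝ), riskIntegrand i j s t δ v) =
      ∫ z in Ioi (0:ℝ), z ^ j * gammaQuadRisk (i + j + 1) (1 / s + z / t) (δ 1 z / s) ∧
    IntegrableOn (fun z => z ^ j * gammaQuadRisk (i + j + 1) (1 / s + z / t) (δ 1 z / s))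
      (Ioi 0) := by
  obtain ⟨heq, hint⟩ := integral_quadrant_eq_integral_rays hint
  have hray : ∀ z ∈ Ioi (0:ℝ), (∫ v in Ioi (0:ℝ), v * riskIntegrand i j s t δ (v, z * v)) =
      z ^ j * gammaQuadRisk (i + j + 1) (1 / s + z / t) (δ 1 z / s) := by
    intro z hz
    rw [gammaQuadRisk, ← integral_const_mul]
    refine setIntegral_congr_fun measurableSet_Ioi fun v hv => ?_
    have hexp : exp (-(1 / s + z / t) * v) = exp (-v / s) * exp (-(z * v) / t) := by
      rw [← exp_add]; ring_nf
    simp only [riskIntegrand, hδ z hz v hv, hexp]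
    ring
  exact ⟨heq.trans (setIntegral_congr_fun measurableSet_Ioi hray),
    hint.congr_fun hray measurableSet_Ioi⟩

end riskIntegrand

lemma setIntegral_lt_setIntegral_of_le_of_lt {α : Type*} [MeasurableSpace α] {μ : Measure α}
    {f g : α → ℝ} {s t : Set α} (hs : MeasurableSet s) (hf : IntegrableOn f s μ)
    (hg : IntegrableOn g s μ) (hle : ∀ x ∈ s, f x ≤ g x) (hts : t ⊆ s) (ht : μ t ≠ 0)
    (hlt : ∀ x ∈ t, f x < g x) :
    ∫ x in s, f x ∂μ < ∫ x in s, g x ∂μ := by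
  have hpos : 0 < ∫ x in s, (g x - f x) ∂μ := by
    rw [setIntegral_pos_iff_support_of_nonneg_ae ((ae_restrict_iff' hs).2
      (Filter.Eventually.of_forall fun x hx => sub_nonneg.2 (hle x hx))) (hg.sub hf)]
    refine (pos_iff_ne_zero.2 ht).trans_le (measure_mono fun x hx => ⟨?_, hts hx⟩)
    exact (sub_pos.2 (hlt x hx)).ne'
  rwa [integral_sub hg hf, sub_pos] at hpos

lemma cast_sub_one_add_sub_one_add_one {p q : ℕ} (hp : 1 ≤ p) (hq : 1 ≤ q) :
    ((p - 1 + (q - 1) + 1 : ℕ) : ℝ) + 2 = p + q + 1 := by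
  have h : p - 1 + (q - 1) + 1 + 2 = p + q + 1 := by omega
  exact_mod_cast h

lemma rate_div_le_pooled {n : ℕ} {s t z : ℝ} (hs : 0 < s) (hst : s ≤ t) (hz : 0 ≤ z) :
    (1 / s + z / t) / (n + 2) ≤ (1 + z) / (n + 2) / s :=
  calc (1 / s + z / t) / (n + 2) ≤ (1 / s + z / s) / (n + 2) := by gcongr
    _ = (1 + z) / (n + 2) / s := by ring

lemma gammaQuadRisk_min_pooled_le {n : ℕ} {s t z : ℝ} (hs : 0 < s) (hst : s ≤ t) (hz : 0 ≤ z)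
    (a : ℝ) :
    gammaQuadRisk n (1 / s + z / t) (min a ((1 + z) / (n + 2)) / s) ≤
      gammaQuadRisk n (1 / s + z / t) (a / s) := by
  rw [← min_div_div_right hs.le]
  exact gammaQuadRisk_min_le (by positivity [hs.trans_le hst]) (rate_div_le_pooled hs hst hz) _

lemma gammaQuadRisk_min_pooled_lt {n : ℕ} {s t z a : ℝ} (hs : 0 < s) (hst : s ≤ t) (hz : 0 ≤ z)
    (ha : (1 + z) / (n + 2) < a) :
    gammaQuadRisk n (1 / s + z / t) (min a ((1 + z) / (n + 2)) / s) <
      gammaQuadRisk n (1 / s + z / t) (a / s) := by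
  rw [min_eq_right ha.le]
  exact gammaQuadRisk_lt (by positivity [hs.trans_le hst]) (rate_div_le_pooled hs hst hz)
    (div_lt_div_of_pos_right ha hs)

lemma integral_riskIntegrand_stein_lt {p q : ℕ} (hp : 1 ≤ p) (hq : 1 ≤ q) {s t : ℝ} (hs : 0 < s)
    (hst : s ≤ t) :
    ∫ v in Ioi (0:ℝ) ×ˢ Ioi (0:ℝ), riskIntegrand (p - 1) (q - 1) s t
        (fun v₁ v₂ => min (v₁ / ((p : ℝ) + 1)) ((v₁ + v₂) / ((p : ℝ) + q + 1))) v <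
      ∫ v in Ioi (0:ℝ) ×ˢ Ioi (0:ℝ), riskIntegrand (p - 1) (q - 1) s t
        (fun v₁ _ => v₁ / ((p : ℝ) + 1)) v := by
  have ht : 0 < t := hs.trans_le hst
  have hint₀ := integrableOn_riskIntegrand_div (p - 1) (q - 1) hs ht ((p : ℝ) + 1)
  have hintS : IntegrableOn (riskIntegrand (p - 1) (q - 1) s t
      (fun v₁ v₂ => min (v₁ / ((p : ℝ) + 1)) ((v₁ + v₂) / ((p : ℝ) + q + 1)))) (Ioi 0 ×ˢ Ioi 0) :=
    integrableOn_riskIntegrand_of_le _ _ hs ht (by fun_prop) hint₀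
      fun v₁ hv₁ v₂ hv₂ => ⟨by positivity, min_le_left _ _⟩
  obtain ⟨heq₀, hint₀⟩ := integral_riskIntegrand_eq (p - 1) (q - 1)
    (fun z _ v _ => by ring) hint₀
  obtain ⟨heqS, hintS⟩ := integral_riskIntegrand_eq (p - 1) (q - 1)
    (fun z _ v hv => by rw [mul_min_of_nonneg _ _ hv.le]; ring_nf) hintS
  have hn := cast_sub_one_add_sub_one_add_one hp hq
  rw [heq₀, heqS, ← hn]
  rw [← hn] at hintS
  refine setIntegral_lt_setIntegral_of_le_of_lt measurableSet_Ioi hintS hint₀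
    (fun z hz => ?_) Ioo_subset_Ioi_self (t := Ioo 0 (q / ((p : ℝ) + 1))) ?_ (fun z hz => ?_)
  · exact mul_le_mul_of_nonneg_left (gammaQuadRisk_min_pooled_le hs hst (le_of_lt hz) _)
      (pow_nonneg (le_of_lt hz) _)
  · have : (0:ℝ) < q := by exact_mod_cast hq
    simpa using div_pos this (by positivity)
  · refine mul_lt_mul_of_pos_left (gammaQuadRisk_min_pooled_lt hs hst hz.1.le ?_)
      (pow_pos hz.1 _)
    have := (lt_div_iff₀ (by positivity)).1 hz.2
    rw [hn, div_lt_div_iff₀ (by positivity) (by positivity)]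
    linarith

end

/-- Stein-type domination for σ₁: under quadratic loss, δ_S = min{V₁/(p+1), (V₁+V₂)/(p+q+1)}
dominates the BAEE δ₀ = V₁/(p+1) whenever σ₁ ≤ σ₂, strictly for some parameter values. -/
theorem stmt15 (p q : ℕ) (hp : 2 ≤ p) (hq : 2 ≤ q)
    (risk : ℝ → ℝ → (ℝ → ℝ → ℝ) → ℝ)
    (hrisk : ∀ σ₁ σ₂ : ℝ, ∀ δ : ℝ → ℝ → ℝ, risk σ₁ σ₂ δ =
      ∫ v in Set.Ioi (0 : ℝ) ×ˢ Set.Ioi (0 : ℝ),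
        (δ v.1 v.2 / σ₁ - 1) ^ 2 *
          (v.1 ^ (p - 1) * Real.exp (-v.1 / σ₁) / (σ₁ ^ p * (Nat.factorial (p - 1)))) *
          (v.2 ^ (q - 1) * Real.exp (-v.2 / σ₂) / (σ₂ ^ q * (Nat.factorial (q - 1))))) :
    (∀ σ₁ σ₂ : ℝ, 0 < σ₁ → σ₁ ≤ σ₂ →
      risk σ₁ σ₂ (fun v₁ v₂ => min (v₁ / ((p : ℝ) + 1)) ((v₁ + v₂) / ((p : ℝ) + q + 1))) ≤
        risk σ₁ σ₂ (fun v₁ v₂ => v₁ / ((p : ℝ) + 1))) ∧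
    (∃ σ₁ σ₂ : ℝ, 0 < σ₁ ∧ σ₁ ≤ σ₂ ∧
      risk σ₁ σ₂ (fun v₁ v₂ => min (v₁ / ((p : ℝ) + 1)) ((v₁ + v₂) / ((p : ℝ) + q + 1))) <
        risk σ₁ σ₂ (fun v₁ v₂ => v₁ / ((p : ℝ) + 1))) := by
  have hrisk' : ∀ σ₁ σ₂ δ, risk σ₁ σ₂ δ = (σ₁ ^ p * (p - 1)! * (σ₂ ^ q * (q - 1)!))⁻¹ *
      ∫ v in Ioi (0:ℝ) ×ˢ Ioi (0:ℝ), riskIntegrand (p - 1) (q - 1) σ₁ σ₂ δ v := by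
    intro σ₁ σ₂ δ
    rw [hrisk, ← integral_const_mul]
    refine setIntegral_congr_fun (measurableSet_Ioi.prod measurableSet_Ioi) fun v _ => ?_
    simp only [riskIntegrand]
    ring
  have hlt : ∀ σ₁ σ₂ : ℝ, 0 < σ₁ → σ₁ ≤ σ₂ →
      risk σ₁ σ₂ (fun v₁ v₂ => min (v₁ / ((p : ℝ) + 1)) ((v₁ + v₂) / ((p : ℝ) + q + 1))) <
        risk σ₁ σ₂ (fun v₁ v₂ => v₁ / ((p : ℝ) + 1)) := by
    intro σ₁ σ₂ h₁ h₁₂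
    have h₂ := h₁.trans_le h₁₂
    rw [hrisk', hrisk']
    exact mul_lt_mul_of_pos_left (integral_riskIntegrand_stein_lt (by omega) (by omega) h₁ h₁₂)
      (by positivity)
  exact ⟨fun σ₁ σ₂ h₁ h₁₂ => (hlt σ₁ σ₂ h₁ h₁₂).le, 1, 1, one_pos, le_rfl, hlt 1 1 one_pos le_rfl⟩
end
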